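/- arXiv:2210.09159 — 3 statements merged into one kernel-verified Lean document; each statement's English description precedes it below -/
import Mathlib

section
/- Let d ≥ 1, 0 < α < 2, 1 < m < 2α/d + 1, and q > 0. Suppose there exists φ ∈ H^{α/2}(ℝ^d) with M[φ] = q and ∫φ^{m+1} > 0. Then I_q < 0, where I_q = inf{ E[v] : v ∈ H^{α/2}(ℝ^d), M[v] = q }. -/
/-
The mass-preserving dilation `φ_θ(x) = θ φ(θ^{2/d} x)` keeps `M[φ_θ] = q`, while
`E[φ_θ] = θ^{2α/d} A - θ^{m-1} B` with `A = (1/2)∫|D^{α/2}φ|²` and `B = (1/(m(m+1)))∫φ^{m+1} > 0`.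
Since `m - 1 < 2α/d`, the negative term dominates as `θ → 0⁺`, so some `φ_θ` has negative energy.
-/

open MeasureTheory

noncomputable section

/-- The mass functional `M[v] = (1/2)∫|v|²`. -/
def Mfun (d : ℕ) (v : EuclideanSpace ℝ (Fin d) → ℝ) : ℝ :=
  (1 / 2) * ∫ x, (v x) ^ 2

/-- The energy functional `E[v] = (1/2)∫|D^{α/2}v|² − (1/(m(m+1)))∫v^{m+1}`. -/
def Efun (d : ℕ) (m : ℝ)
    (Dhalf : (EuclideanSpace ℝ (Fin d) → ℝ) → EuclideanSpace ℝ (Fin d) → ℝ)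
    (v : EuclideanSpace ℝ (Fin d) → ℝ) : ℝ :=
  (1 / 2) * (∫ x, (Dhalf v x) ^ 2) - (1 / (m * (m + 1))) * ∫ x, v x ^ (m + 1)

open Filter Topology Module

/-- `Real.mul_rpow` without a sign condition on `a`: for `a < 0` both sides carry the factor
`cos (p * π)` of Mathlib's convention for negative bases. -/
lemma Real.mul_rpow_of_pos_left {θ : ℝ} (hθ : 0 < θ) (a p : ℝ) :
    (θ * a) ^ p = θ ^ p * a ^ p := by
  rcases le_or_gt 0 a with ha | ha
  · exact Real.mul_rpow hθ.le ha
  · rw [Real.rpow_def_of_neg (mul_neg_of_pos_of_neg hθ ha), Real.rpow_def_of_neg ha,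
      Real.rpow_def_of_pos hθ, Real.log_mul hθ.ne' ha.ne, add_mul, Real.exp_add]
    ring

lemma exists_rpow_mul_lt_rpow_mul {p q : ℝ} (hpq : p < q) (A : ℝ) {B : ℝ} (hB : 0 < B) :
    ∃ θ > 0, θ ^ q * A < θ ^ p * B := by
  have hlim : Tendsto (fun θ : ℝ => θ ^ (q - p) * A) (𝓝[>] 0) (𝓝 0) := by
    have hcont := Real.continuousAt_rpow_const 0 (q - p) (Or.inr (sub_pos.2 hpq).le)
    simpa [Real.zero_rpow (sub_pos.2 hpq).ne'] using
      (hcont.tendsto.mono_left nhdsWithin_le_nhds).mul_const A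
  obtain ⟨θ, hθA, hθ⟩ :=
    ((hlim.eventually (gt_mem_nhds hB)).and self_mem_nhdsWithin).exists
  refine ⟨θ, hθ, ?_⟩
  calc θ ^ q * A = θ ^ p * (θ ^ (q - p) * A) := by
        rw [← mul_assoc, ← Real.rpow_add hθ, add_sub_cancel]
    _ < θ ^ p * B := mul_lt_mul_of_pos_left hθA (Real.rpow_pos_of_pos hθ p)

theorem integral_comp_rpow_div_finrank_smul
    {E F : Type*} [NormedAddCommGroup E] [NormedSpace ℝ E] [MeasurableSpace E] [BorelSpace E]
    [FiniteDimensional ℝ E] [NormedAddCommGroup F] [NormedSpace ℝ F]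
    (μ : Measure E) [μ.IsAddHaarMeasure] (hE : 0 < finrank ℝ E) {θ : ℝ} (hθ : 0 < θ)
    (p : ℝ) (f : E → F) :
    ∫ x, f ((θ ^ (p / finrank ℝ E)) • x) ∂μ = θ ^ (-p) • ∫ x, f x ∂μ := by
  rw [Measure.integral_comp_smul_of_nonneg μ f _ (hR := (Real.rpow_pos_of_pos hθ _).le),
    ← Real.rpow_natCast, ← Real.rpow_mul hθ.le, div_mul_cancel₀ _ (by positivity),
    ← Real.rpow_neg hθ.le]

/-- The dilation `φ_θ` of the paper. -/
def massScaling (d : ℕ) (θ : ℝ) (v : EuclideanSpace ℝ (Fin d) → ℝ) :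
    EuclideanSpace ℝ (Fin d) → ℝ :=
  fun x => θ * v ((θ ^ (2 / (d : ℝ))) • x)

section massScaling

variable {d : ℕ} {θ : ℝ}

lemma integral_comp_rpow_two_div_smul (hd : 0 < d) (hθ : 0 < θ)
    (f : EuclideanSpace ℝ (Fin d) → ℝ) :
    ∫ x, f ((θ ^ (2 / (d : ℝ))) • x) = θ ^ (-2 : ℝ) * ∫ x, f x := by
  have := integral_comp_rpow_div_finrank_smul volume
    (by rwa [finrank_euclideanSpace_fin]) hθ 2 f
  rwa [finrank_euclideanSpace_fin] at this

lemma Mfun_massScaling (hd : 0 < d) (hθ : 0 < θ) (v : EuclideanSpace ℝ (Fin d) → ℝ) :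
    Mfun d (massScaling d θ v) = Mfun d v := by
  simp only [Mfun, massScaling, mul_pow, integral_const_mul,
    integral_comp_rpow_two_div_smul hd hθ fun y => v y ^ 2, Real.rpow_neg hθ.le, Real.rpow_two]
  field_simp

lemma integral_massScaling_rpow (hd : 0 < d) (hθ : 0 < θ)
    (v : EuclideanSpace ℝ (Fin d) → ℝ) (p : ℝ) :
    ∫ x, massScaling d θ v x ^ p = θ ^ (p - 2) * ∫ x, v x ^ p := by
  simp only [massScaling, Real.mul_rpow_of_pos_left hθ, integral_const_mul,
    integral_comp_rpow_two_div_smul hd hθ fun y => v y ^ p]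
  rw [← mul_assoc, ← Real.rpow_add hθ, sub_eq_add_neg]

lemma integral_sq_Dhalf_massScaling (hd : 0 < d) (hθ : 0 < θ) {α : ℝ}
    {Dhalf : (EuclideanSpace ℝ (Fin d) → ℝ) → EuclideanSpace ℝ (Fin d) → ℝ}
    (hDhom : ∀ (c : ℝ) (v : EuclideanSpace ℝ (Fin d) → ℝ),
      Dhalf (fun x => c * v x) = fun x => c * Dhalf v x)
    (hDscale : ∀ (v : EuclideanSpace ℝ (Fin d) → ℝ) (lam : ℝ), 0 < lam →
      Dhalf (fun x => v (lam • x)) = fun x => lam ^ (α / 2) * Dhalf v (lam • x))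
    (v : EuclideanSpace ℝ (Fin d) → ℝ) :
    ∫ x, Dhalf (massScaling d θ v) x ^ 2 = θ ^ (2 * α / d) * ∫ x, Dhalf v x ^ 2 := by
  have hlam : 0 < θ ^ (2 / (d : ℝ)) := Real.rpow_pos_of_pos hθ _
  have hfactor : (θ * (θ ^ (2 / (d : ℝ))) ^ (α / 2)) ^ 2 * θ ^ (-2 : ℝ) = θ ^ (2 * α / d) :=
    calc (θ * (θ ^ (2 / (d : ℝ))) ^ (α / 2)) ^ 2 * θ ^ (-2 : ℝ)
        = θ ^ 2 * θ ^ (-2 : ℝ) * θ ^ (2 / (d : ℝ) * (α / 2) * (2 : ℕ)) := by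
          rw [← Real.rpow_mul hθ.le, Real.rpow_mul_natCast hθ.le]
          ring
      _ = θ ^ (2 * α / d) := by
          rw [Real.rpow_neg hθ.le, Real.rpow_two, mul_inv_cancel₀ (by positivity), one_mul]
          congr 1
          push_cast
          ring
  unfold massScaling
  rw [hDhom, hDscale v _ hlam]
  simp only [← mul_assoc, mul_pow, integral_const_mul,
    integral_comp_rpow_two_div_smul hd hθ fun y => Dhalf v y ^ 2]
  rw [← hfactor, mul_pow]

end massScaling

theorem stmt_5_general (d : ℕ) (hd : 1 ≤ d) (α m q : ℝ)
    (hm1 : 1 < m) (hm2 : m < 2 * α / (d : ℝ) + 1)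
    (Dhalf : (EuclideanSpace ℝ (Fin d) → ℝ) → EuclideanSpace ℝ (Fin d) → ℝ)
    (hDhom : ∀ (c : ℝ) (v : EuclideanSpace ℝ (Fin d) → ℝ),
      Dhalf (fun x => c * v x) = fun x => c * Dhalf v x)
    (hDscale : ∀ (v : EuclideanSpace ℝ (Fin d) → ℝ) (lam : ℝ), 0 < lam →
      Dhalf (fun x => v (lam • x)) = fun x => lam ^ (α / 2) * Dhalf v (lam • x))
    (S : Set (EuclideanSpace ℝ (Fin d) → ℝ))
    (hSscale : ∀ θ : ℝ, 0 < θ → ∀ v ∈ S,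
      (fun x : EuclideanSpace ℝ (Fin d) => θ * v ((θ ^ (2 / (d : ℝ))) • x)) ∈ S)
    (φ : EuclideanSpace ℝ (Fin d) → ℝ) (hφS : φ ∈ S) (hφM : Mfun d φ = q)
    (hφpos : 0 < ∫ x, φ x ^ (m + 1)) :
    sInf ((fun v => ((Efun d m Dhalf v : ℝ) : EReal))
      '' {v | v ∈ S ∧ Mfun d v = q}) < 0 := by
  have hB : 0 < 1 / (m * (m + 1)) * ∫ x, φ x ^ (m + 1) :=
    mul_pos (one_div_pos.2 (mul_pos (by linarith) (by linarith))) hφpos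
  obtain ⟨θ, hθ, hlt⟩ := exists_rpow_mul_lt_rpow_mul (p := m - 1) (q := 2 * α / d)
    (by linarith) ((1 / 2) * ∫ x, Dhalf φ x ^ 2) hB
  have hE : Efun d m Dhalf (massScaling d θ φ) < 0 := by
    rw [Efun, integral_sq_Dhalf_massScaling hd hθ hDhom hDscale,
      integral_massScaling_rpow hd hθ, show m + 1 - 2 = m - 1 by ring]
    linarith
  have hmem : massScaling d θ φ ∈ {v | v ∈ S ∧ Mfun d v = q} :=
    ⟨hSscale θ hθ φ hφS, (Mfun_massScaling hd hθ φ).trans hφM⟩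
  exact (sInf_le (Set.mem_image_of_mem _ hmem)).trans_lt (mod_cast hE)

/-- Let `d ≥ 1`, `0 < α < 2`, `1 < m < 2α/d + 1`, `q > 0`. Suppose there
exists `φ ∈ H^{α/2}(ℝ^d)` (the class `S`, closed under the scaling
`φ_θ(x) = θ φ(θ^{2/d} x)`, with finite `L²` and `Ḣ^{α/2}` seminorms) with `M[φ] = q` and
`∫φ^{m+1} > 0`. Then `I_q < 0`, where `I_q = inf { E[v] : v ∈ H^{α/2}, M[v] = q }`
(as an extended real number). -/
theorem stmt_5 (d : ℕ) (hd : 1 ≤ d) (α m q : ℝ) (hα0 : 0 < α) (hα2 : α < 2)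
    (hm1 : 1 < m) (hm2 : m < 2 * α / (d : ℝ) + 1) (hq : 0 < q)
    (Dhalf : (EuclideanSpace ℝ (Fin d) → ℝ) → EuclideanSpace ℝ (Fin d) → ℝ)
    (hDhom : ∀ (c : ℝ) (v : EuclideanSpace ℝ (Fin d) → ℝ),
      Dhalf (fun x => c * v x) = fun x => c * Dhalf v x)
    (hDscale : ∀ (v : EuclideanSpace ℝ (Fin d) → ℝ) (lam : ℝ), 0 < lam →
      Dhalf (fun x => v (lam • x)) = fun x => lam ^ (α / 2) * Dhalf v (lam • x))
    (S : Set (EuclideanSpace ℝ (Fin d) → ℝ))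
    (hSfin : ∀ f ∈ S, Integrable (fun x => (f x) ^ 2) ∧
      Integrable (fun x => (Dhalf f x) ^ 2))
    (hSscale : ∀ θ : ℝ, 0 < θ → ∀ v ∈ S,
      (fun x : EuclideanSpace ℝ (Fin d) => θ * v ((θ ^ (2 / (d : ℝ))) • x)) ∈ S)
    (φ : EuclideanSpace ℝ (Fin d) → ℝ) (hφS : φ ∈ S) (hφM : Mfun d φ = q)
    (hφpos : 0 < ∫ x, φ x ^ (m + 1))
    (hφint : Integrable (fun x => φ x ^ (m + 1))) :
    sInf ((fun v => ((Efun d m Dhalf v : ℝ) : EReal))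
      '' {v | v ∈ S ∧ Mfun d v = q}) < 0 :=
  stmt_5_general d hd α m q hm1 hm2 Dhalf hDhom hDscale S hSscale φ hφS hφM hφpos
end
end

section
/- Let d ≥ 1, r > d, let K, f ∈ L¹(ℝ^d) with |K(x)| ≲ |x|^{−r} and |f(x)| ≲ ⟨x⟩^{−r}, and suppose lim_{|x|→∞} |x|^r K(x) = K₀ and lim_{|x|→∞} |x|^r f(x) = 0. Then lim_{|x|→∞} |x|^r (K ∗ f)(x) = K₀ ∫_{ℝ^d} f(y) dy. -/
/-!
Split `‖x‖ ^ r (K ∗ f)(x)` at `‖y‖ = ‖x‖ / 2`. On the ball `‖x - y‖ ≥ ‖x‖ / 2`, so the weighted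
kernel `‖x‖ ^ r K (x - y)` is bounded by a multiple of `2 ^ r` and tends to `K₀` pointwise;
dominated convergence against `|f|` gives `K₀ ∫ f`. Off the ball `‖y‖ ≥ ‖x‖ / 2`, so
`‖x‖ ^ r |f y| ≤ 2 ^ r ‖y‖ ^ r |f y|` is uniformly small and that part is at most a small multiple
of `‖K‖₁`. Both bounds use that, by the two limits, `‖z‖ ^ r |K z|` stays bounded and
`‖z‖ ^ r |f z|` becomes small as `‖z‖ → ∞`.
-/

open MeasureTheory Filter Bornology Metric Asymptotics Topology

section Decay

variable {E : Type*} [SeminormedAddCommGroup E] {r : ℝ}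

lemma exists_forall_norm_rpow_mul_abs_le_of_tendsto {g : E → ℝ} {L C : ℝ}
    (hg : Tendsto (fun z => ‖z‖ ^ r * g z) (cobounded E) (𝓝 L)) (hC : |L| < C) :
    ∃ R, ∀ z, R ≤ ‖z‖ → ‖z‖ ^ r * |g z| ≤ C := by
  obtain ⟨R, -, hR⟩ := hasBasis_cobounded_norm.eventually_iff.1
    (hg.abs.eventually (eventually_lt_nhds hC))
  refine ⟨R, fun z hz => ?_⟩
  have := hR hz
  rw [abs_mul, abs_of_nonneg (Real.rpow_nonneg (norm_nonneg z) r)] at this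
  exact this.le

lemma norm_rpow_mul_abs_le_of_norm_le_two_mul {g : E → ℝ} {R C : ℝ} (hr : 0 ≤ r)
    (hg : ∀ z, R ≤ ‖z‖ → ‖z‖ ^ r * |g z| ≤ C) {x z : E} (hx : 2 * R ≤ ‖x‖)
    (hxz : ‖x‖ ≤ 2 * ‖z‖) : ‖x‖ ^ r * |g z| ≤ 2 ^ r * C :=
  calc ‖x‖ ^ r * |g z| ≤ (2 * ‖z‖) ^ r * |g z| := by gcongr
    _ = 2 ^ r * (‖z‖ ^ r * |g z|) := by
      rw [Real.mul_rpow zero_le_two (norm_nonneg z)]; ring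
    _ ≤ 2 ^ r * C := by gcongr; exact hg z (by linarith)

lemma tendsto_norm_div_norm_sub_cobounded (y : E) :
    Tendsto (fun x => ‖x‖ / ‖x - y‖) (cobounded E) (𝓝 1) := by
  have hsub : Tendsto (fun x => ‖x - y‖) (cobounded E) atTop :=
    tendsto_norm_cobounded_atTop.comp (tendsto_sub_const_cobounded y)
  have hbdd : (fun x => ‖x‖ - ‖x - y‖) =O[cobounded E] fun _ => (1 : ℝ) :=
    IsBigO.of_bound ‖y‖ (Eventually.of_forall fun x => by
      simpa [sub_sub_cancel] using abs_norm_sub_norm_le x (x - y))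
  have hequiv : (fun x => ‖x‖) ~[cobounded E] fun x => ‖x - y‖ :=
    hbdd.trans_isLittleO (isLittleO_const_left.2 (Or.inr (tendsto_abs_atTop_atTop.comp hsub)))
  exact (isEquivalent_iff_tendsto_one (hsub.eventually_gt_atTop 0 |>.mono fun _ h => h.ne')).1
    hequiv

lemma Filter.Tendsto.norm_rpow_mul_comp_sub_const {g : E → ℝ} {L : ℝ}
    (hg : Tendsto (fun z => ‖z‖ ^ r * g z) (cobounded E) (𝓝 L)) (y : E) :
    Tendsto (fun x => ‖x‖ ^ r * g (x - y)) (cobounded E) (𝓝 L) := by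
  have hsub := tendsto_sub_const_cobounded (R := E) y
  have hlim := ((tendsto_norm_div_norm_sub_cobounded y).rpow_const (p := r)
    (Or.inl one_ne_zero)).mul (hg.comp hsub)
  rw [Real.one_rpow, one_mul] at hlim
  refine hlim.congr' ?_
  filter_upwards [(tendsto_norm_cobounded_atTop.comp hsub).eventually_gt_atTop 0] with x hx
  simp only [Function.comp_apply] at hx ⊢
  rw [Real.div_rpow (norm_nonneg x) hx.le]
  field_simp [(Real.rpow_pos_of_pos hx r).ne']

end Decay

section Convolution

variable {E : Type*} [NormedAddCommGroup E] [MeasurableSpace E] [BorelSpace E] {μ : Measure E}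
  [μ.IsAddLeftInvariant] [μ.IsNegInvariant] {r K₀ RK Rf CK Cf : ℝ} {K f : E → ℝ}

lemma integrable_norm_rpow_mul_mul_comp_sub (hr : 0 ≤ r) (hKint : Integrable K μ)
    (hfint : Integrable f μ) (hCK : 0 ≤ CK) (hCf : 0 ≤ Cf)
    (hK : ∀ z, RK ≤ ‖z‖ → ‖z‖ ^ r * |K z| ≤ CK) (hf : ∀ z, Rf ≤ ‖z‖ → ‖z‖ ^ r * |f z| ≤ Cf)
    {x : E} (hxK : 2 * RK ≤ ‖x‖) (hxf : 2 * Rf ≤ ‖x‖) :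
    Integrable (fun y => ‖x‖ ^ r * (K (x - y) * f y)) μ := by
  refine Integrable.mono' (g := fun y => 2 ^ r * CK * |f y| + 2 ^ r * Cf * |K (x - y)|)
    ((hfint.abs.const_mul _).add ((hKint.comp_sub_left x).abs.const_mul _))
    (((hKint.comp_sub_left x).aestronglyMeasurable.mul hfint.aestronglyMeasurable).const_mul _)
    (Eventually.of_forall fun y => ?_)
  have hxr : 0 ≤ ‖x‖ ^ r := Real.rpow_nonneg (norm_nonneg x) r
  rw [Real.norm_eq_abs, abs_mul, abs_of_nonneg hxr, abs_mul]
  have htri := norm_le_norm_add_norm_sub' x y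
  rcases le_total ‖y‖ (‖x‖ / 2) with hy | hy
  · have := norm_rpow_mul_abs_le_of_norm_le_two_mul hr hK hxK (z := x - y) (by linarith)
    have : 0 ≤ 2 ^ r * Cf * |K (x - y)| := by positivity
    nlinarith [abs_nonneg (f y)]
  · have := norm_rpow_mul_abs_le_of_norm_le_two_mul hr hf hxf (z := y) (by linarith)
    have : 0 ≤ 2 ^ r * CK * |f y| := by positivity
    nlinarith [abs_nonneg (K (x - y))]

lemma tendsto_integral_indicator_closedBall_norm_rpow_mul (hr : 0 ≤ r) (hKint : Integrable K μ)
    (hfint : Integrable f μ) (hKlim : Tendsto (fun z => ‖z‖ ^ r * K z) (cobounded E) (𝓝 K₀)) :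
    Tendsto (fun x => ∫ y, (closedBall (0 : E) (‖x‖ / 2)).indicator
      (fun y => ‖x‖ ^ r * (K (x - y) * f y)) y ∂μ) (cobounded E) (𝓝 (K₀ * ∫ y, f y ∂μ)) := by
  obtain ⟨R, hR⟩ := exists_forall_norm_rpow_mul_abs_le_of_tendsto hKlim (lt_add_one |K₀|)
  have : (cobounded E).IsCountablyGenerated := comap_norm_atTop (E := E) ▸ inferInstance
  rw [← integral_const_mul]
  refine tendsto_integral_filter_of_dominated_convergence (fun y => 2 ^ r * (|K₀| + 1) * |f y|)
    (Eventually.of_forall fun x => ?_) ?_ (hfint.abs.const_mul _) (Eventually.of_forall fun y => ?_)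
  · exact (((hKint.comp_sub_left x).aestronglyMeasurable.mul
      hfint.aestronglyMeasurable).const_mul _).indicator measurableSet_closedBall
  · filter_upwards [eventually_cobounded_le_norm (2 * R)] with x hx
    refine Eventually.of_forall fun y => ?_
    by_cases hy : y ∈ closedBall (0 : E) (‖x‖ / 2)
    · rw [mem_closedBall_zero_iff] at hy
      have := norm_rpow_mul_abs_le_of_norm_le_two_mul hr hR hx (z := x - y)
        (by linarith [norm_le_norm_add_norm_sub' x y])
      rw [Set.indicator_of_mem (mem_closedBall_zero_iff.2 hy), Real.norm_eq_abs, abs_mul,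
        abs_of_nonneg (Real.rpow_nonneg (norm_nonneg x) r), abs_mul, ← mul_assoc]
      gcongr
    · rw [Set.indicator_of_notMem hy, norm_zero]
      positivity
  · have hball : ∀ᶠ x in cobounded E, y ∈ closedBall (0 : E) (‖x‖ / 2) := by
      filter_upwards [eventually_cobounded_le_norm (2 * ‖y‖)] with x hx
      rw [mem_closedBall_zero_iff]
      linarith
    refine ((hKlim.norm_rpow_mul_comp_sub_const y).mul_const (f y)).congr' ?_
    filter_upwards [hball] with x hx
    rw [Set.indicator_of_mem hx, mul_assoc]

lemma tendsto_setIntegral_compl_closedBall_norm_rpow_mul (hr : 0 ≤ r) (hKint : Integrable K μ)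
    (hflim : Tendsto (fun z => ‖z‖ ^ r * f z) (cobounded E) (𝓝 0)) :
    Tendsto (fun x => ∫ y in (closedBall (0 : E) (‖x‖ / 2))ᶜ, ‖x‖ ^ r * (K (x - y) * f y) ∂μ)
      (cobounded E) (𝓝 0) := by
  rw [← isLittleO_one_iff ℝ]
  refine IsLittleO.trans_isBigO (g := fun _ => 2 ^ r * ∫ z, |K z| ∂μ) ?_
    (isBigO_const_const _ one_ne_zero _)
  refine isLittleO_iff.2 fun c hc => ?_
  obtain ⟨R, hR⟩ := exists_forall_norm_rpow_mul_abs_le_of_tendsto hflim (abs_zero.trans_lt hc)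
  filter_upwards [eventually_cobounded_le_norm (2 * R)] with x hx
  have hKx : Integrable (fun y => 2 ^ r * c * |K (x - y)|) μ :=
    (hKint.comp_sub_left x).abs.const_mul _
  calc ‖∫ y in (closedBall (0 : E) (‖x‖ / 2))ᶜ, ‖x‖ ^ r * (K (x - y) * f y) ∂μ‖
      ≤ ∫ y in (closedBall (0 : E) (‖x‖ / 2))ᶜ, 2 ^ r * c * |K (x - y)| ∂μ := by
        refine norm_integral_le_of_norm_le hKx.integrableOn <|
          (ae_restrict_iff' measurableSet_closedBall.compl).2 (Eventually.of_forall fun y hy => ?_)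
        rw [Set.mem_compl_iff, mem_closedBall_zero_iff, not_le] at hy
        have := norm_rpow_mul_abs_le_of_norm_le_two_mul hr hR hx (z := y) (by linarith)
        rw [Real.norm_eq_abs, abs_mul, abs_of_nonneg (Real.rpow_nonneg (norm_nonneg x) r), abs_mul,
          mul_left_comm, mul_comm (2 ^ r * c)]
        gcongr
    _ ≤ ∫ y, 2 ^ r * c * |K (x - y)| ∂μ :=
        setIntegral_le_integral hKx (Eventually.of_forall fun y => by positivity)
    _ = c * ‖2 ^ r * ∫ z, |K z| ∂μ‖ := by
        rw [integral_const_mul, integral_sub_left_eq_self (fun z => |K z|),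
          Real.norm_of_nonneg (by positivity)]
        ring

theorem tendsto_norm_rpow_mul_integral_mul_comp_sub (hr : 0 ≤ r) (hKint : Integrable K μ)
    (hfint : Integrable f μ) (hKlim : Tendsto (fun z => ‖z‖ ^ r * K z) (cobounded E) (𝓝 K₀))
    (hflim : Tendsto (fun z => ‖z‖ ^ r * f z) (cobounded E) (𝓝 0)) :
    Tendsto (fun x => ‖x‖ ^ r * ∫ y, K (x - y) * f y ∂μ) (cobounded E)
      (𝓝 (K₀ * ∫ y, f y ∂μ)) := by
  obtain ⟨RK, hRK⟩ := exists_forall_norm_rpow_mul_abs_le_of_tendsto hKlim (lt_add_one |K₀|)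
  obtain ⟨Rf, hRf⟩ :=
    exists_forall_norm_rpow_mul_abs_le_of_tendsto hflim (abs_zero.trans_lt one_pos)
  have hsplit : ∀ᶠ x in cobounded E,
      (∫ y, (closedBall (0 : E) (‖x‖ / 2)).indicator (fun y => ‖x‖ ^ r * (K (x - y) * f y)) y ∂μ)
        + ∫ y in (closedBall (0 : E) (‖x‖ / 2))ᶜ, ‖x‖ ^ r * (K (x - y) * f y) ∂μ
      = ‖x‖ ^ r * ∫ y, K (x - y) * f y ∂μ := by
    filter_upwards [eventually_cobounded_le_norm (2 * RK), eventually_cobounded_le_norm (2 * Rf)]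
      with x hxK hxf
    rw [integral_indicator measurableSet_closedBall, integral_add_compl measurableSet_closedBall
      (integrable_norm_rpow_mul_mul_comp_sub hr hKint hfint (by positivity) zero_le_one hRK hRf
        hxK hxf), integral_const_mul]
  simpa using ((tendsto_integral_indicator_closedBall_norm_rpow_mul hr hKint hfint hKlim).add
    (tendsto_setIntegral_compl_closedBall_norm_rpow_mul hr hKint hflim)).congr' hsplit

end Convolution

theorem stmt_11_general (d : ℕ) (r : ℝ) (hr : (d : ℝ) < r)
    (K f : EuclideanSpace ℝ (Fin d) → ℝ) (K₀ : ℝ)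
    (hKint : Integrable K) (hfint : Integrable f)
    (hKlim : Tendsto (fun x : EuclideanSpace ℝ (Fin d) => ‖x‖ ^ r * K x)
      (cocompact _) (nhds K₀))
    (hflim : Tendsto (fun x : EuclideanSpace ℝ (Fin d) => ‖x‖ ^ r * f x)
      (cocompact _) (nhds 0)) :
    Tendsto (fun x : EuclideanSpace ℝ (Fin d) => ‖x‖ ^ r * ∫ y, K (x - y) * f y)
      (cocompact _) (nhds (K₀ * ∫ y, f y)) := by
  rw [← cobounded_eq_cocompact] at hKlim hflim ⊢
  exact tendsto_norm_rpow_mul_integral_mul_comp_sub ((Nat.cast_nonneg d).trans hr.le) hKint hfint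
    hKlim hflim

/-- **Frank–Lenzmann–Silvestre decay lemma.** Let `d ≥ 1`, `r > d`, let
`K, f ∈ L¹(ℝ^d)` with `|K(x)| ≲ |x|^{−r}` and `|f(x)| ≲ ⟨x⟩^{−r}`, and suppose
`lim_{|x|→∞} |x|^r K(x) = K₀` and `lim_{|x|→∞} |x|^r f(x) = 0`. Then
`lim_{|x|→∞} |x|^r (K ∗ f)(x) = K₀ ∫ f`. -/
theorem stmt_11 (d : ℕ) (hd : 1 ≤ d) (r : ℝ) (hr : (d : ℝ) < r)
    (K f : EuclideanSpace ℝ (Fin d) → ℝ) (K₀ : ℝ)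
    (hKint : Integrable K) (hfint : Integrable f)
    (CK Cf : ℝ)
    (hK : ∀ x : EuclideanSpace ℝ (Fin d), x ≠ 0 → |K x| ≤ CK * ‖x‖ ^ (-r))
    (hf : ∀ x : EuclideanSpace ℝ (Fin d), |f x| ≤ Cf * Real.sqrt (1 + ‖x‖ ^ 2) ^ (-r))
    (hKlim : Tendsto (fun x : EuclideanSpace ℝ (Fin d) => ‖x‖ ^ r * K x)
      (cocompact _) (nhds K₀))
    (hflim : Tendsto (fun x : EuclideanSpace ℝ (Fin d) => ‖x‖ ^ r * f x)
      (cocompact _) (nhds 0)) :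
    Tendsto (fun x : EuclideanSpace ℝ (Fin d) => ‖x‖ ^ r * ∫ y, K (x - y) * f y)
      (cocompact _) (nhds (K₀ * ∫ y, f y)) :=
  stmt_11_general d r hr K f K₀ hKint hfint hKlim hflim
end

section
/- Let d ≥ 1, 0 < α < 2 with α > 1 − d/2 if d ≥ 2 (α > 1/2 if d = 1), and suppose G : ℝ^d → ℝ satisfies |G(x)| ≲ ⟨x⟩^{−α−d}. Define F(x₁,…,x_d) = ∫_{−∞}^{x₁} G(κ, x₂,…,x_d) dκ. Then for any m₁, m₂ > 0 with m₁ + m₂ = d + α and m₂ > 1, one has |F(x)| ≲ ⟨(x₂,…,x_d)⟩^{−m₁}. Moreover, for any A ≥ 1 the truncation F·σ_A, where σ_A(x) = σ̃(x₁/A) with σ̃ a smooth cutoff supported in [−2,2], satisfies ‖F σ_A‖_{L²(ℝ^d)} ≲ 1 + A^{1/2} provided m₁ > (d−1)/2. -/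
open MeasureTheory
open scoped ENNReal

noncomputable section

lemma aux_two (r u : ℝ) (hr : 0 ≤ r) (hu : 0 ≤ u) :
    (1 + u ^ 2) ^ (-r) ≤ 2 ^ r * (1 + u) ^ (-(2 * r)) := by
  have h1 : (0:ℝ) < 1 + u ^ 2 := by positivity
  have h2 : (0:ℝ) < 1 + u := by positivity
  have e2 : (1 + u) ^ (-(2 * r)) = ((1 + u) ^ (2:ℝ)) ^ (-r) := by
    rw [← Real.rpow_mul h2.le]; congr 1; ring
  have e3 : (1 + u) ^ (2:ℝ) ≤ 2 * (1 + u ^ 2) := by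
    have : (1 + u) ^ (2:ℝ) = (1 + u) ^ (2:ℕ) := by
      exact_mod_cast Real.rpow_natCast (1 + u) 2
    rw [this]
    nlinarith [sq_nonneg (u - 1)]
  have e4 : ((2 * (1 + u ^ 2)):ℝ) ^ (-r) ≤ ((1 + u) ^ (2:ℝ)) ^ (-r) :=
    Real.rpow_le_rpow_of_nonpos (by positivity) e3 (by linarith)
  have e5 : ((2 * (1 + u ^ 2)):ℝ) ^ (-r) = 2 ^ (-r) * (1 + u ^ 2) ^ (-r) :=
    Real.mul_rpow (by norm_num) h1.le
  calc (1 + u ^ 2) ^ (-r) = 2 ^ r * (2 ^ (-r) * (1 + u ^ 2) ^ (-r)) := by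
        rw [← mul_assoc, ← Real.rpow_add two_pos]; simp
    _ = 2 ^ r * ((2 * (1 + u ^ 2)) ^ (-r)) := by rw [e5]
    _ ≤ 2 ^ r * ((1 + u) ^ (2:ℝ)) ^ (-r) := by
        exact mul_le_mul_of_nonneg_left e4 (by positivity)
    _ = 2 ^ r * (1 + u) ^ (-(2 * r)) := by rw [e2]

lemma aux_sqr (x c : ℝ) (hx : 0 ≤ x) : Real.sqrt x ^ (-c) = x ^ (-(c / 2)) := by
  rw [Real.sqrt_eq_rpow, ← Real.rpow_mul hx]; congr 1; ring

lemma aux_pt (m₁ m₂ t κ : ℝ) (hm₁ : 0 < m₁) (hm₂ : 0 < m₂) (ht : 0 ≤ t) :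
    Real.sqrt (1 + κ ^ 2 + t) ^ (-(m₁ + m₂)) ≤
      2 ^ (m₂ / 2) * (1 + |κ|) ^ (-m₂) * Real.sqrt (1 + t) ^ (-m₁) := by
  have ha : (0:ℝ) < 1 + κ ^ 2 + t := by positivity
  have hb : (0:ℝ) < 1 + t := by positivity
  rw [aux_sqr _ _ (by positivity), aux_sqr _ _ (by positivity)]
  have split : (1 + κ ^ 2 + t) ^ (-((m₁ + m₂) / 2)) =
      (1 + κ ^ 2 + t) ^ (-(m₂ / 2)) * (1 + κ ^ 2 + t) ^ (-(m₁ / 2)) := by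
    rw [← Real.rpow_add ha]; congr 1; ring
  rw [split]
  have h1 : (1 + κ ^ 2 + t) ^ (-(m₂ / 2)) ≤ 2 ^ (m₂ / 2) * (1 + |κ|) ^ (-m₂) := by
    have s1 : (1 + κ ^ 2 + t) ^ (-(m₂ / 2)) ≤ (1 + κ ^ 2) ^ (-(m₂ / 2)) :=
      Real.rpow_le_rpow_of_nonpos (by positivity) (by linarith) (by linarith)
    have s2 := aux_two (m₂ / 2) |κ| (by linarith) (abs_nonneg κ)
    rw [sq_abs] at s2
    have : 2 * (m₂ / 2) = m₂ := by ring
    rw [this] at s2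
    linarith
  have h2 : (1 + κ ^ 2 + t) ^ (-(m₁ / 2)) ≤ (1 + t) ^ (-(m₁ / 2)) :=
    Real.rpow_le_rpow_of_nonpos hb (by nlinarith [sq_nonneg κ]) (by linarith)
  exact mul_le_mul h1 h2 (by positivity) (by positivity)

/-- **decay and `L²` bound of the truncated primitive.** Let `d ≥ 1`,
`0 < α < 2` with `α > 1 − d/2` if `d ≥ 2` (`α > 1/2` if `d = 1`), and suppose
`G : ℝ^d → ℝ` satisfies `|G(x)| ≲ ⟨x⟩^{−α−d}`. Writing points of `ℝ^d` as
`(x₁, (x₂,…,x_d)) ∈ ℝ × ℝ^{d−1}`, define `F(x₁,…,x_d) = ∫_{−∞}^{x₁} G(κ, x₂,…,x_d) dκ`.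
Then for any `m₁, m₂ > 0` with `m₁ + m₂ = d + α` and `m₂ > 1`, one has
`|F(x)| ≲ ⟨(x₂,…,x_d)⟩^{−m₁}`. Moreover, for any `A ≥ 1` the truncation `F·σ_A`, where
`σ_A(x) = σ̃(x₁/A)` with `σ̃` a smooth cutoff equal to `1` on `[−1,1]` and supported in
`[−2,2]`, satisfies `‖F σ_A‖_{L²(ℝ^d)} ≲ 1 + A^{1/2}` provided `m₁ > (d−1)/2`. -/
theorem stmt_18 (d : ℕ) (hd : 1 ≤ d) (α : ℝ) (hα0 : 0 < α) (hα2 : α < 2)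
    (hα1 : d = 1 → 1 / 2 < α) (hα2' : 2 ≤ d → 1 - (d : ℝ) / 2 < α)
    (G : ℝ × EuclideanSpace ℝ (Fin (d - 1)) → ℝ)
    (CG : ℝ) (hCG : 0 < CG)
    (hG : ∀ p : ℝ × EuclideanSpace ℝ (Fin (d - 1)),
      |G p| ≤ CG * Real.sqrt (1 + p.1 ^ 2 + ‖p.2‖ ^ 2) ^ (-(α + (d : ℝ))))
    (sig : ℝ → ℝ) (hsig : ContDiff ℝ (⊤ : ℕ∞) sig)
    (hsig1 : ∀ t : ℝ, |t| ≤ 1 → sig t = 1)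
    (hsig0 : ∀ t : ℝ, 2 ≤ |t| → sig t = 0) :
    (∀ m₁ m₂ : ℝ, 0 < m₁ → 1 < m₂ → m₁ + m₂ = (d : ℝ) + α →
      ∃ C : ℝ, 0 < C ∧ ∀ p : ℝ × EuclideanSpace ℝ (Fin (d - 1)),
        |∫ κ in Set.Iio p.1, G (κ, p.2)| ≤ C * Real.sqrt (1 + ‖p.2‖ ^ 2) ^ (-m₁)) ∧
    (∀ m₁ m₂ : ℝ, ((d : ℝ) - 1) / 2 < m₁ → 1 < m₂ → m₁ + m₂ = (d : ℝ) + α →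
      ∃ C : ℝ, 0 < C ∧ ∀ A : ℝ, 1 ≤ A →
        eLpNorm (fun p : ℝ × EuclideanSpace ℝ (Fin (d - 1)) =>
            (∫ κ in Set.Iio p.1, G (κ, p.2)) * sig (p.1 / A)) 2 volume
          ≤ ENNReal.ofReal (C * (1 + Real.sqrt A))) := by
  have hpart1 : ∀ m₁ m₂ : ℝ, 0 < m₁ → 1 < m₂ → m₁ + m₂ = (d : ℝ) + α →
      ∃ C : ℝ, 0 < C ∧ ∀ p : ℝ × EuclideanSpace ℝ (Fin (d - 1)),
        |∫ κ in Set.Iio p.1, G (κ, p.2)| ≤ C * Real.sqrt (1 + ‖p.2‖ ^ 2) ^ (-m₁) := by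
    intro m₁ m₂ hm₁ hm₂ hsum
    have hint : Integrable (fun κ : ℝ => (1 + |κ|) ^ (-m₂)) := by
      have := integrable_one_add_norm (E := ℝ) (μ := volume) (r := m₂) (by simpa using hm₂)
      simpa [Real.norm_eq_abs] using this
    set J := ∫ κ : ℝ, (1 + |κ|) ^ (-m₂) with hJdef
    have hJ : 0 ≤ J := integral_nonneg fun κ => by positivity
    refine ⟨CG * 2 ^ (m₂ / 2) * J + 1, by positivity, ?_⟩
    intro p
    set B := Real.sqrt (1 + ‖p.2‖ ^ 2) ^ (-m₁) with hBdef
    have hB : 0 ≤ B := by positivity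
    have hexp : -(α + (d:ℝ)) = -(m₁ + m₂) := by rw [hsum]; ring
    have hptwise : ∀ κ : ℝ, |G (κ, p.2)| ≤ CG * 2 ^ (m₂ / 2) * B * (1 + |κ|) ^ (-m₂) := by
      intro κ
      have h2 := hG (κ, p.2)
      rw [hexp] at h2
      have h3 := aux_pt m₁ m₂ (‖p.2‖ ^ 2) κ hm₁ (lt_trans one_pos hm₂) (sq_nonneg _)
      calc |G (κ, p.2)| ≤ CG * Real.sqrt (1 + κ ^ 2 + ‖p.2‖ ^ 2) ^ (-(m₁ + m₂)) := h2
        _ ≤ CG * (2 ^ (m₂ / 2) * (1 + |κ|) ^ (-m₂) * B) := by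
            exact mul_le_mul_of_nonneg_left h3 hCG.le
        _ = CG * 2 ^ (m₂ / 2) * B * (1 + |κ|) ^ (-m₂) := by ring
    have hψint : Integrable (fun κ : ℝ => CG * 2 ^ (m₂ / 2) * B * (1 + |κ|) ^ (-m₂)) :=
      hint.const_mul _
    have h1 : |∫ κ in Set.Iio p.1, G (κ, p.2)| ≤ ∫ κ in Set.Iio p.1, |G (κ, p.2)| := by
      simpa [Real.norm_eq_abs] using
        norm_integral_le_integral_norm (μ := volume.restrict (Set.Iio p.1))
          (f := fun κ => G (κ, p.2))
    have h2 : (∫ κ in Set.Iio p.1, |G (κ, p.2)|) ≤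
        ∫ κ in Set.Iio p.1, CG * 2 ^ (m₂ / 2) * B * (1 + |κ|) ^ (-m₂) :=
      integral_mono_of_nonneg (Filter.Eventually.of_forall fun κ => abs_nonneg _)
        hψint.restrict (Filter.Eventually.of_forall fun κ => hptwise κ)
    have h3 : (∫ κ in Set.Iio p.1, CG * 2 ^ (m₂ / 2) * B * (1 + |κ|) ^ (-m₂)) ≤
        ∫ κ : ℝ, CG * 2 ^ (m₂ / 2) * B * (1 + |κ|) ^ (-m₂) :=
      setIntegral_le_integral hψint (Filter.Eventually.of_forall fun κ => by positivity)
    have h4 : (∫ κ : ℝ, CG * 2 ^ (m₂ / 2) * B * (1 + |κ|) ^ (-m₂)) =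
        CG * 2 ^ (m₂ / 2) * B * J := by
      rw [hJdef, ← MeasureTheory.integral_const_mul]
    have h5 : CG * 2 ^ (m₂ / 2) * B * J ≤ (CG * 2 ^ (m₂ / 2) * J + 1) * B := by
      nlinarith [hB, hJ, hCG.le, Real.rpow_nonneg (by norm_num : (0:ℝ) ≤ 2) (m₂ / 2)]
    linarith
  refine ⟨hpart1, ?_⟩
  intro m₁ m₂ hm₁ hm₂ hsum
  have hd1 : (1:ℝ) ≤ (d:ℝ) := by exact_mod_cast hd
  have hm₁0 : 0 < m₁ := lt_of_le_of_lt (by linarith) hm₁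
  obtain ⟨C, hC, hFb⟩ := hpart1 m₁ m₂ hm₁0 hm₂ hsum
  -- bound on sig
  obtain ⟨M, hM0, hMb⟩ : ∃ M : ℝ, 0 < M ∧ ∀ t, |sig t| ≤ M := by
    obtain ⟨t₀, ht₀, hmax⟩ := (isCompact_Icc (a := (-2:ℝ)) (b := 2)).exists_isMaxOn
      (by norm_num : (Set.Icc (-2:ℝ) 2).Nonempty)
      (hsig.continuous.abs.continuousOn)
    refine ⟨|sig t₀| + 1, by positivity, fun t => ?_⟩
    by_cases h : t ∈ Set.Icc (-2:ℝ) 2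
    · have := hmax h
      simp only [Set.mem_setOf_eq] at this
      linarith [this]
    · rw [hsig0 t ?_]
      · simp; positivity
      · simp only [Set.mem_Icc, not_and_or, not_le] at h
        rcases h with h | h
        · rw [abs_of_neg (by linarith)]; linarith
        · rw [abs_of_pos (by linarith)]; linarith
  -- integrability on E
  have hfrank : ((Module.finrank ℝ (EuclideanSpace ℝ (Fin (d - 1)))):ℝ) < 2 * m₁ := by
    rw [finrank_euclideanSpace_fin]
    have : ((d - 1 : ℕ):ℝ) = (d:ℝ) - 1 := by
      push_cast [Nat.cast_sub hd]; ring
    rw [this]; linarith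
  have hEint : Integrable (fun y : EuclideanSpace ℝ (Fin (d - 1)) => (1 + ‖y‖) ^ (-(2 * m₁))) :=
    integrable_one_add_norm hfrank
  set J' := ∫ y : EuclideanSpace ℝ (Fin (d - 1)), (1 + ‖y‖) ^ (-(2 * m₁)) with hJ'def
  have hJ' : 0 ≤ J' := integral_nonneg fun y => by positivity
  set Q := (2:ℝ) ^ m₁ * (J' + 1) with hQdef
  have hQ : 0 < Q := by positivity
  set K₀ := 2 * (C * M) * Real.sqrt Q with hK₀def
  have hK₀ : 0 ≤ K₀ := by positivity
  refine ⟨K₀ + 1, by positivity, ?_⟩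
  intro A hA
  have hA0 : 0 < A := lt_of_lt_of_le one_pos hA
  set c₀ := (C * M) ^ 2 * 2 ^ m₁ with hc₀def
  have hc₀ : 0 ≤ c₀ := by positivity
  set φ : ℝ → ℝ≥0∞ :=
    (Set.Icc (-(2 * A)) (2 * A)).indicator (fun _ => ENNReal.ofReal c₀) with hφdef
  set ψ : EuclideanSpace ℝ (Fin (d - 1)) → ℝ≥0∞ :=
    fun y => ENNReal.ofReal ((1 + ‖y‖) ^ (-(2 * m₁))) with hψdef
  -- pointwise bound
  have hpt : ∀ p : ℝ × EuclideanSpace ℝ (Fin (d - 1)),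
      (‖(∫ κ in Set.Iio p.1, G (κ, p.2)) * sig (p.1 / A)‖₊ : ℝ≥0∞) ^ (2:ℝ)
        ≤ φ p.1 * ψ p.2 := by
    intro p
    by_cases hp : p.1 ∈ Set.Icc (-(2 * A)) (2 * A)
    · rw [hφdef]
      rw [Set.indicator_of_mem hp]
      have habs : |(∫ κ in Set.Iio p.1, G (κ, p.2)) * sig (p.1 / A)|
          ≤ C * M * Real.sqrt (1 + ‖p.2‖ ^ 2) ^ (-m₁) := by
        rw [abs_mul]
        calc |∫ κ in Set.Iio p.1, G (κ, p.2)| * |sig (p.1 / A)|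
            ≤ (C * Real.sqrt (1 + ‖p.2‖ ^ 2) ^ (-m₁)) * M :=
              mul_le_mul (hFb p) (hMb _) (abs_nonneg _) (by positivity)
          _ = C * M * Real.sqrt (1 + ‖p.2‖ ^ 2) ^ (-m₁) := by ring
      have hsq : |(∫ κ in Set.Iio p.1, G (κ, p.2)) * sig (p.1 / A)| ^ (2:ℕ)
          ≤ c₀ * (1 + ‖p.2‖) ^ (-(2 * m₁)) := by
        have hB2 : (Real.sqrt (1 + ‖p.2‖ ^ 2) ^ (-m₁)) ^ (2:ℕ) = (1 + ‖p.2‖ ^ 2) ^ (-m₁) := by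
          rw [Real.sqrt_eq_rpow, ← Real.rpow_mul (by positivity), ← Real.rpow_natCast _ 2,
            ← Real.rpow_mul (by positivity)]
          congr 1
          push_cast
          ring
        have haux := aux_two m₁ ‖p.2‖ hm₁0.le (norm_nonneg _)
        calc |(∫ κ in Set.Iio p.1, G (κ, p.2)) * sig (p.1 / A)| ^ (2:ℕ)
            ≤ (C * M * Real.sqrt (1 + ‖p.2‖ ^ 2) ^ (-m₁)) ^ (2:ℕ) :=
              pow_le_pow_left₀ (abs_nonneg _) habs 2
          _ = (C * M) ^ (2:ℕ) * (Real.sqrt (1 + ‖p.2‖ ^ 2) ^ (-m₁)) ^ (2:ℕ) := by ring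
          _ = (C * M) ^ (2:ℕ) * (1 + ‖p.2‖ ^ 2) ^ (-m₁) := by rw [hB2]
          _ ≤ (C * M) ^ (2:ℕ) * (2 ^ m₁ * (1 + ‖p.2‖) ^ (-(2 * m₁))) :=
              mul_le_mul_of_nonneg_left haux (by positivity)
          _ = c₀ * (1 + ‖p.2‖) ^ (-(2 * m₁)) := by rw [hc₀def]; ring
      calc (‖(∫ κ in Set.Iio p.1, G (κ, p.2)) * sig (p.1 / A)‖₊ : ℝ≥0∞) ^ (2:ℝ)
          = ENNReal.ofReal (|(∫ κ in Set.Iio p.1, G (κ, p.2)) * sig (p.1 / A)| ^ (2:ℝ)) := by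
            rw [← enorm_eq_nnnorm, ← ofReal_norm, Real.norm_eq_abs,
              ENNReal.ofReal_rpow_of_nonneg (abs_nonneg _) (by norm_num)]
        _ ≤ ENNReal.ofReal (c₀ * (1 + ‖p.2‖) ^ (-(2 * m₁))) := by
            apply ENNReal.ofReal_le_ofReal
            rw [show ((2:ℝ)) = ((2:ℕ):ℝ) by norm_num, Real.rpow_natCast]
            exact hsq
        _ = ENNReal.ofReal c₀ * ψ p.2 := by
            rw [hψdef, ← ENNReal.ofReal_mul hc₀]
    · have hzero : sig (p.1 / A) = 0 := by
        apply hsig0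
        simp only [Set.mem_Icc, not_and_or, not_le] at hp
        rw [abs_div, abs_of_pos hA0, le_div_iff₀ hA0]
        rcases hp with h | h
        · rw [abs_of_neg (by linarith)]; linarith
        · rw [abs_of_pos (by linarith)]; linarith
      rw [hφdef, Set.indicator_of_notMem hp, hzero]
      simp [ENNReal.zero_rpow_of_pos (by norm_num : (0:ℝ) < 2)]
  -- measurability
  have hφm : AEMeasurable φ (volume : Measure ℝ) :=
    ((measurable_const.indicator measurableSet_Icc)).aemeasurable
  have hψm : AEMeasurable ψ (volume : Measure (EuclideanSpace ℝ (Fin (d - 1)))) := by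
    apply Measurable.aemeasurable
    apply Measurable.ennreal_ofReal
    exact ((continuous_const.add continuous_norm).rpow_const
      (fun y => Or.inl (ne_of_gt (add_pos_of_pos_of_nonneg one_pos (norm_nonneg _))))).measurable
  -- compute
  rw [eLpNorm_eq_lintegral_rpow_enorm_toReal (by norm_num) (by norm_num)]
  have htr : (2:ℝ≥0∞).toReal = 2 := by norm_num
  rw [htr]
  have hlin : (∫⁻ p : ℝ × EuclideanSpace ℝ (Fin (d - 1)),
      (‖(∫ κ in Set.Iio p.1, G (κ, p.2)) * sig (p.1 / A)‖₊ : ℝ≥0∞) ^ (2:ℝ) ∂volume)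
      ≤ ENNReal.ofReal (K₀ ^ 2 * A) := by
    calc (∫⁻ p : ℝ × EuclideanSpace ℝ (Fin (d - 1)),
        (‖(∫ κ in Set.Iio p.1, G (κ, p.2)) * sig (p.1 / A)‖₊ : ℝ≥0∞) ^ (2:ℝ) ∂volume)
        ≤ ∫⁻ p : ℝ × EuclideanSpace ℝ (Fin (d - 1)), φ p.1 * ψ p.2 ∂volume :=
          lintegral_mono hpt
      _ = (∫⁻ x : ℝ, φ x) * ∫⁻ y : EuclideanSpace ℝ (Fin (d - 1)), ψ y := by
          rw [Measure.volume_eq_prod, lintegral_prod_mul hφm hψm]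
      _ = (ENNReal.ofReal c₀ * ENNReal.ofReal (4 * A)) * ENNReal.ofReal J' := by
          congr 1
          · rw [hφdef, lintegral_indicator measurableSet_Icc, setLIntegral_const,
              Real.volume_Icc]
            congr 2
            ring
          · rw [hψdef, ← ofReal_integral_eq_lintegral_ofReal hEint
              (Filter.Eventually.of_forall fun y => by positivity)]
      _ ≤ (ENNReal.ofReal c₀ * ENNReal.ofReal (4 * A)) * ENNReal.ofReal (J' + 1) := by
          gcongr
          linarith
      _ = ENNReal.ofReal (c₀ * (4 * A) * (J' + 1)) := by
          rw [← ENNReal.ofReal_mul hc₀, ← ENNReal.ofReal_mul (by positivity)]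
      _ = ENNReal.ofReal (K₀ ^ 2 * A) := by
          congr 1
          have hQsq : Real.sqrt Q ^ 2 = Q := Real.sq_sqrt hQ.le
          rw [hc₀def, hK₀def, mul_pow (2 * (C * M)) (Real.sqrt Q) 2, hQsq, hQdef]
          ring
  calc (∫⁻ p : ℝ × EuclideanSpace ℝ (Fin (d - 1)),
      (‖(∫ κ in Set.Iio p.1, G (κ, p.2)) * sig (p.1 / A)‖₊ : ℝ≥0∞) ^ (2:ℝ) ∂volume) ^ (1 / (2:ℝ))
      ≤ ENNReal.ofReal (K₀ ^ 2 * A) ^ (1 / (2:ℝ)) := ENNReal.rpow_le_rpow hlin (by norm_num)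
    _ = ENNReal.ofReal ((K₀ ^ 2 * A) ^ ((1:ℝ) / 2)) :=
        ENNReal.ofReal_rpow_of_nonneg (by positivity) (by norm_num)
    _ ≤ ENNReal.ofReal ((K₀ + 1) * (1 + Real.sqrt A)) := by
        apply ENNReal.ofReal_le_ofReal
        have h1 : (K₀ ^ 2 * A) ^ ((1:ℝ) / 2) = Real.sqrt (K₀ ^ 2 * A) := by
          rw [Real.sqrt_eq_rpow]
        rw [h1, Real.sqrt_mul (by positivity), Real.sqrt_sq hK₀]
        nlinarith [Real.sqrt_nonneg A, Real.sq_sqrt hA0.le,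
          Real.sqrt_le_sqrt hA, Real.sqrt_one, hK₀]
end
end
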